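/- Let C₁, C₂ ∈ SL(2,ℝ) be parabolic elements with C₁ = Φ(a₁) and C₂ = P·Φ(a₂)·P⁻¹, P ∈ SL(2,ℝ) with (2,1)-entry c. The product C₁C₂ is parabolic or ±I (i.e., |tr(C₁C₂)| = 2) if and only if c = 0, or c = ±2 and (Im(a₁)-Re(a₁))·(Im(a₂)-Re(a₂)) = 1. -/

import Mathlib

/-!
Write `N(s) = !![1, s; 0, 1]`, so that `Φ(a) = ±N(s)` with `s = Im a - Re a`. For `P ∈ SL(2)` with
lower-left entry `c`, `P N(μ) P⁻¹ = 1 + μ !![-ac, a²; -c², ac]`, whence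
`tr(N(s) P N(μ) P⁻¹) = 2 - sμc²` and `|tr(C₁C₂)| = |2 - sμc²|`. As `s, μ = ±1`, this equals `2`
exactly when `c = 0`, or `sμ = 1` and `c² = 4`.
-/

open Matrix Complex

noncomputable def PhiMat (a : ℂ) : Matrix (Fin 2) (Fin 2) ℝ :=
  ((-1 : ℝ) ^ (⌊a.re⌋ + 1)) • !![1, a.im - a.re; 0, 1]

theorem Matrix.inv_fin_two_of_det_eq_one {R : Type*} [CommRing R] {a b c d : R}
    (h : a * d - b * c = 1) : (!![a, b; c, d])⁻¹ = !![d, -b; -c, a] := by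
  rw [inv_def, det_fin_two_of, h, Ring.inverse_one, one_smul, adjugate_fin_two_of]

theorem trace_unipotent_mul_conj_unipotent {R : Type*} [CommRing R] (s μ : R) {a b c d : R}
    (h : a * d - b * c = 1) :
    trace (!![1, s; 0, 1] * (!![a, b; c, d] * !![1, μ; 0, 1] * (!![a, b; c, d])⁻¹))
      = 2 - s * μ * c ^ 2 := by
  rw [inv_fin_two_of_det_eq_one h]
  simp only [mul_fin_two, trace_fin_two_of]
  linear_combination 2 * h

theorem im_sub_re_eq_one_or_neg_one {a : ℂ} (ha : a = 1 ∨ a = -1 ∨ a = I ∨ a = -I) :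
    a.im - a.re = 1 ∨ a.im - a.re = -1 := by
  rcases ha with rfl | rfl | rfl | rfl <;> norm_num

theorem abs_two_sub_eq_two_iff {x : ℝ} : |2 - x| = 2 ↔ x = 0 ∨ x = 4 := by
  rw [abs_eq zero_le_two]
  constructor <;> rintro (h | h) <;> [left; right; left; right] <;> linarith

theorem abs_two_sub_mul_sq_eq_two_iff {t c : ℝ} (ht : t = 1 ∨ t = -1) :
    |2 - t * c ^ 2| = 2 ↔ c = 0 ∨ ((c = 2 ∨ c = -2) ∧ t = 1) := by
  rw [abs_two_sub_eq_two_iff]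
  rcases ht with rfl | rfl
  · have h4 : c ^ 2 = 4 ↔ c = 2 ∨ c = -2 := by
      rw [show (4 : ℝ) = 2 ^ 2 by norm_num, sq_eq_sq_iff_eq_or_eq_neg]
    simp [h4]
  · have hneg : -c ^ 2 ≠ 4 := by nlinarith [sq_nonneg c]
    norm_num [hneg]

theorem abs_trace_PhiMat_mul_conj (a₁ a₂ : ℂ) {a b c d : ℝ} (h : a * d - b * c = 1) :
    |trace (PhiMat a₁ * (!![a, b; c, d] * PhiMat a₂ * (!![a, b; c, d])⁻¹))|
      = |2 - (a₁.im - a₁.re) * (a₂.im - a₂.re) * c ^ 2| := by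
  simp only [PhiMat, smul_mul_assoc, mul_smul_comm, trace_smul, smul_eq_mul, abs_mul,
    abs_neg_one_zpow, one_mul, trace_unipotent_mul_conj_unipotent _ _ h]

/-- Let `C₁ = Φ(a₁)` and `C₂ = P Φ(a₂) P⁻¹` with `P = !![a,b;c,d] ∈ SL(2,ℝ)`. Then
`|tr(C₁C₂)| = 2` if and only if `c = 0`, or `c = ±2` and
`(Im a₁ - Re a₁)(Im a₂ - Re a₂) = 1`. -/
theorem abs_trace_eq_two_iff (a₁ a₂ : ℂ)
    (h₁ : a₁ = 1 ∨ a₁ = -1 ∨ a₁ = Complex.I ∨ a₁ = -Complex.I)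
    (h₂ : a₂ = 1 ∨ a₂ = -1 ∨ a₂ = Complex.I ∨ a₂ = -Complex.I)
    (a b c d : ℝ) (h : a * d - b * c = 1) :
    |Matrix.trace (PhiMat a₁ * (!![a, b; c, d] * PhiMat a₂ * (!![a, b; c, d])⁻¹))| = 2
      ↔ c = 0 ∨ ((c = 2 ∨ c = -2) ∧ (a₁.im - a₁.re) * (a₂.im - a₂.re) = 1) := by
  rw [abs_trace_PhiMat_mul_conj a₁ a₂ h]
  apply abs_two_sub_mul_sq_eq_two_iff
  rcases im_sub_re_eq_one_or_neg_one h₁ with hs | hs <;>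
    rcases im_sub_re_eq_one_or_neg_one h₂ with hμ | hμ <;> norm_num [hs, hμ]
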